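/- arXiv:2512.17071 — 4 statements merged into one kernel-verified Lean document; each statement's English description precedes it below -/
import Mathlib

section
/- Let G be a finite graph on vertex set V, let M, D, K be positive integers with K ≥ 2, let I be a finite index set, and for each i ∈ I let β_i : V × V → ℚ be antisymmetric, supported on edges, with |β_i(u,v)| ≤ M and D·β_i(u,v) ∈ ℤ for every (u,v) ∈ E(G). Fix i₀ ∈ I and m : I → ℤ such that m(i₀) ∈ {1, K} and 2 ≤ m(i) ≤ K−1 for every i ≠ i₀ (so m has one single tight coordinate). If α is a circulation on G satisfying ∑_{(u,v)∈E(G)} α(u,v)·β_{i₀}(u,v) = 0, then the total deficiency over the box vanishes: ∑_{(u,x)∈V_m} def_α(u,x) = 0. -/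
/-!
Exchanging the order of summation, the total deficiency is `∑ α(u,v) N(u,v)` over the edges,
where `N(u,v)` counts the box points `x` with `x + β(u,v) ∈ (0, KM]^I`. This count factorises
over the coordinates. A window `(M(m-1), Mm]` with `2 ≤ m ≤ K - 1` is never pushed out of
`(0, KM]` by a shift of size at most `M`, while the tight window loses exactly the negative part
of `±β_{i₀}(u,v)`. So `N = C (A + min (c, 0))` with `c = ±D β_{i₀}` and constants `A, C`. Writing
`min (c, 0) = (c - |c|) / 2`, the constant term vanishes by the flow condition, the `c` term by
orthogonality, and the `|c|` term because `α` is antisymmetric while `|β_{i₀}|` is symmetric.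
-/

open Finset

section EdgeSums

variable {V R : Type*} [Fintype V] (G : SimpleGraph V) [DecidableRel G.Adj]
  [Field R] [LinearOrder R] [IsStrictOrderedRing R]

lemma sum_adj_eq_zero_of_antisymm {g : V → V → R} (hg : ∀ u v, G.Adj u v → g u v = -g v u) :
    ∑ u : V, ∑ v ∈ univ.filter (fun v => G.Adj u v), g u v = 0 := by
  simp_rw [sum_filter]
  refine self_eq_neg.mp ?_
  conv_lhs => rw [sum_comm]
  simp_rw [← sum_neg_distrib]
  refine sum_congr rfl fun u _ => sum_congr rfl fun v _ => ?_
  by_cases huv : G.Adj u v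
  · simp [huv, huv.symm, hg v u huv.symm]
  · have hvu : ¬G.Adj v u := fun h => huv h.symm
    simp [huv, hvu]

lemma sum_adj_add_min_zero_mul_eq_zero {α c : V → V → R} (hα : ∀ u v, α u v = -α v u)
    (hflow : ∀ u, ∑ v ∈ univ.filter (fun v => G.Adj u v), α u v = 0)
    (hc : ∀ u v, c u v = -c v u)
    (horth : ∑ u : V, ∑ v ∈ univ.filter (fun v => G.Adj u v), α u v * c u v = 0) (A : R) :
    ∑ u : V, ∑ v ∈ univ.filter (fun v => G.Adj u v), (A + min (c u v) 0) * α u v = 0 := by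
  have habs : ∑ u : V, ∑ v ∈ univ.filter (fun v => G.Adj u v), α u v * |c u v| = 0 :=
    sum_adj_eq_zero_of_antisymm G fun u v _ => by rw [hα u v, hc u v, abs_neg, neg_mul]
  have hmin : ∀ x : R, min x 0 = (x - |x|) / 2 := fun x => by
    rcases le_total x 0 with hx | hx
    · rw [min_eq_left hx, abs_of_nonpos hx]; ring
    · rw [min_eq_right hx, abs_of_nonneg hx]; ring
  have hsplit : ∀ u v, (A + min (c u v) 0) * α u v
      = A * α u v + (α u v * c u v) / 2 - (α u v * |c u v|) / 2 := fun u v => by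
    rw [hmin]; ring
  simp_rw [hsplit, sum_sub_distrib, sum_add_distrib, ← sum_div, ← mul_sum, hflow, horth, habs]
  simp

end EdgeSums

lemma sum_sum_filter_and_eq_sum_card_smul {ι κ M : Type*} [AddCommMonoid M]
    (T : Finset ι) (S : Finset κ) (p : κ → Prop) [DecidablePred p]
    (q : ι → κ → Prop) [∀ t, DecidablePred (q t)] [∀ v, DecidablePred (q · v)] (f : κ → M) :
    ∑ t ∈ T, ∑ v ∈ S.filter (fun v => p v ∧ q t v), f v
      = ∑ v ∈ S.filter p, #(T.filter (q · v)) • f v := by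
  simp_rw [← filter_filter, sum_filter (q _)]
  rw [sum_comm]
  simp_rw [← sum_filter, sum_const]

lemma card_filter_piFinset_forall {ι : Type*} [Fintype ι] [DecidableEq ι] {δ : ι → Type*}
    [∀ i, DecidableEq (δ i)] (s : ∀ i, Finset (δ i)) (p : ∀ i, δ i → Prop)
    [∀ i, DecidablePred (p i)] :
    #((Fintype.piFinset s).filter fun f => ∀ i, p i (f i)) = ∏ i, #((s i).filter (p i)) := by
  rw [← Fintype.card_piFinset]
  congr 1
  ext f
  simp only [mem_filter, Fintype.mem_piFinset, forall_and]

lemma Int.card_filter_Ioc_add (lo hi c N : ℤ) :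
    (#((Ioc lo hi).filter fun z => 0 < z + c ∧ z + c ≤ N) : ℤ)
      = max (min hi (N - c) - max lo (-c)) 0 := by
  rw [← Int.toNat_eq_max, ← Int.card_Ioc]
  congr 2
  ext z
  simp only [mem_filter, mem_Ioc, max_lt_iff, le_min_iff]
  omega

-- With `a = D M`, the `m`-th window `(a (m - 1), a m]` holds the values of `D x(i)` on `V_m`.
noncomputable def windowCount (a K m c : ℤ) : ℕ :=
  #((Ioc (a * (m - 1)) (a * m)).filter fun z => 0 < z + c ∧ z + c ≤ a * K)

section windowCount

variable {a K m c : ℤ}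

lemma windowCount_of_two_le_of_le_sub_one (hc : |c| ≤ a) (h2 : 2 ≤ m) (hmK : m ≤ K - 1) :
    (windowCount a K m c : ℤ) = a := by
  obtain ⟨hc₁, hc₂⟩ := abs_le.mp hc
  have : a ≤ a * m - a := by nlinarith
  have : a * m ≤ a * K - a := by nlinarith
  rw [windowCount, Int.card_filter_Ioc_add, mul_sub_one]
  omega

lemma windowCount_one (hK : 2 ≤ K) (hc : |c| ≤ a) :
    (windowCount a K 1 c : ℤ) = a + min c 0 := by
  obtain ⟨hc₁, hc₂⟩ := abs_le.mp hc
  have : a ≤ a * K - a := by nlinarith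
  rw [windowCount, Int.card_filter_Ioc_add]
  omega

lemma windowCount_self (hK : 2 ≤ K) (hc : |c| ≤ a) :
    (windowCount a K K c : ℤ) = a + min (-c) 0 := by
  obtain ⟨hc₁, hc₂⟩ := abs_le.mp hc
  have : a ≤ a * K - a := by nlinarith
  rw [windowCount, Int.card_filter_Ioc_add, mul_sub_one]
  omega

lemma exists_windowCount_eq_add_min (hK : 2 ≤ K) (hm : m = 1 ∨ m = K) :
    ∃ e : ℤ, ∀ c, |c| ≤ a → (windowCount a K m c : ℤ) = a + min (e * c) 0 := by
  rcases hm with rfl | rfl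
  · exact ⟨1, fun c hc => by rw [windowCount_one hK hc, one_mul]⟩
  · exact ⟨-1, fun c hc => by rw [windowCount_self hK hc, neg_one_mul]⟩

end windowCount

section RationalShift

variable {D : ℕ} {β : ℚ} {b : ℤ}

lemma abs_le_mul_of_natCast_mul_eq {M : ℕ} (hb : (D : ℚ) * β = b) (hβ : |β| ≤ M) :
    |b| ≤ D * M := by
  have hD : (0 : ℚ) ≤ D := D.cast_nonneg
  have : |(b : ℚ)| ≤ D * M := by
    rw [← hb, abs_mul, abs_of_nonneg hD]
    exact mul_le_mul_of_nonneg_left hβ hD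
  exact_mod_cast this

lemma div_add_mem_Ioc_iff (hD : 0 < D) (hb : (D : ℚ) * β = b) (t N : ℤ) :
    (0 < (t : ℚ) / D + β ∧ (t : ℚ) / D + β ≤ N) ↔ (0 < t + b ∧ t + b ≤ D * N) := by
  have hDq : (0 : ℚ) < D := by exact_mod_cast hD
  have key : (t : ℚ) / D + β = ((t + b : ℤ) : ℚ) / D := by
    rw [Int.cast_add, ← hb]; field_simp
  rw [key, div_pos_iff_of_pos_right hDq, div_le_iff₀ hDq, mul_comm]
  exact_mod_cast Iff.rfl

lemma card_filter_Ioc_div_add_eq_windowCount (hD : 0 < D) (hb : (D : ℚ) * β = b) (M K : ℕ)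
    (m : ℤ) :
    #((Ioc ((D : ℤ) * M * (m - 1)) ((D : ℤ) * M * m)).filter fun z : ℤ =>
        0 < (z : ℚ) / D + β ∧ (z : ℚ) / D + β ≤ K * M) = windowCount (D * M) K m b := by
  refine congrArg card (filter_congr fun z _ => ?_)
  rw [show (K : ℚ) * M = ((M * K : ℤ) : ℚ) by push_cast; ring, div_add_mem_Ioc_iff hD hb,
    ← mul_assoc]

end RationalShift

lemma card_filter_box_eq {I : Type*} [Fintype I] [DecidableEq I] {M D K : ℕ} (hD : 0 < D)
    {β : I → ℚ} {b : I → ℤ} (hb : ∀ i, (D : ℚ) * β i = b i) (hβ : ∀ i, |β i| ≤ M)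
    {i₀ : I} {m : I → ℤ} (hm : ∀ i, i ≠ i₀ → 2 ≤ m i ∧ m i ≤ (K : ℤ) - 1) :
    (#((Fintype.piFinset fun i => Ioc ((D : ℤ) * M * (m i - 1)) ((D : ℤ) * M * m i)).filter
        fun t => ∀ i, 0 < (t i : ℚ) / D + β i ∧ (t i : ℚ) / D + β i ≤ K * M) : ℤ)
      = ((D : ℤ) * M) ^ (Fintype.card I - 1) * windowCount (D * M) K (m i₀) (b i₀) := by
  rw [card_filter_piFinset_forall _ fun i (z : ℤ) =>
      0 < (z : ℚ) / D + β i ∧ (z : ℚ) / D + β i ≤ K * M]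
  simp_rw [card_filter_Ioc_div_add_eq_windowCount hD (hb _)]
  rw [Fintype.prod_eq_mul_prod_compl i₀, prod_eq_pow_card (b := (D * M : ℕ)), card_compl,
    card_singleton, mul_comm]
  · norm_cast
  · intro i hi
    have hi : i ≠ i₀ := by simpa using hi
    have := windowCount_of_two_le_of_le_sub_one
      (abs_le_mul_of_natCast_mul_eq (hb i) (hβ i)) (hm i hi).1 (hm i hi).2
    omega

theorem stmt_0_general {V : Type*} [Fintype V] {I : Type*} [Fintype I] [DecidableEq I]
    (G : SimpleGraph V) [DecidableRel G.Adj]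
    (M D K : ℕ) (hD : 0 < D) (hK : 2 ≤ K)
    (β : I → V → V → ℚ)
    (hβanti : ∀ i u v, β i u v = - β i v u)
    (hβbound : ∀ i u v, G.Adj u v → |β i u v| ≤ (M : ℚ))
    (hβint : ∀ i u v, G.Adj u v → ∃ z : ℤ, (D : ℚ) * β i u v = (z : ℚ))
    (i₀ : I) (m : I → ℤ)
    (hm₀ : m i₀ = 1 ∨ m i₀ = (K : ℤ))
    (hm : ∀ i, i ≠ i₀ → 2 ≤ m i ∧ m i ≤ (K : ℤ) - 1)
    (α : V → V → ℝ)
    (hαanti : ∀ u v, α u v = - α v u)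
    (hflow : ∀ u, ∑ v ∈ Finset.univ.filter (fun v => G.Adj u v), α u v = 0)
    (horth : ∑ u : V, ∑ v ∈ Finset.univ.filter (fun v => G.Adj u v),
        α u v * (β i₀ u v : ℝ) = 0) :
    ∑ u : V, ∑ t ∈ Fintype.piFinset
        (fun i : I => Finset.Ioc ((D : ℤ) * (M : ℤ) * (m i - 1)) ((D : ℤ) * (M : ℤ) * m i)),
      (∑ v ∈ Finset.univ.filter (fun v =>
          G.Adj u v ∧ ∀ i : I, 0 < (t i : ℚ) / (D : ℚ) + β i u v ∧
            (t i : ℚ) / (D : ℚ) + β i u v ≤ (K : ℚ) * (M : ℚ)),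
        α u v) = 0 := by
  choose! b hb using hβint
  obtain ⟨e, htight⟩ := exists_windowCount_eq_add_min (a := D * M) (by exact_mod_cast hK) hm₀
  have horth' : ∑ u : V, ∑ v ∈ univ.filter (fun v => G.Adj u v),
      α u v * (e * D * β i₀ u v : ℝ) = 0 := by
    simp_rw [mul_left_comm _ ((e : ℝ) * D), ← mul_sum, horth, mul_zero]
  have hmin := sum_adj_add_min_zero_mul_eq_zero G hαanti hflow
    (fun u v => by rw [hβanti i₀ u v]; push_cast; ring) horth' (D * M)
  rw [sum_congr rfl fun u _ => sum_sum_filter_and_eq_sum_card_smul _ _ _ _ _]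
  calc _ = ∑ u : V, ∑ v ∈ univ.filter (fun v => G.Adj u v), ((D : ℝ) * M) ^ (Fintype.card I - 1)
          * ((D * M + min (e * D * β i₀ u v : ℝ) 0) * α u v) := by
        refine sum_congr rfl fun u _ => sum_congr rfl fun v hv => ?_
        have huv := (mem_filter.mp hv).2
        have hbR : ((b i₀ u v : ℤ) : ℝ) = D * β i₀ u v := by exact_mod_cast (hb i₀ u v huv).symm
        rw [nsmul_eq_mul, ← Int.cast_natCast, card_filter_box_eq hD (hb · u v huv)
          (hβbound · u v huv) hm, htight _ (abs_le_mul_of_natCast_mul_eq (hb i₀ u v huv)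
          (hβbound i₀ u v huv))]
        push_cast
        rw [hbR, mul_assoc (e : ℝ), mul_assoc]
    _ = 0 := by simp_rw [← mul_sum, hmin, mul_zero]

/-- Deficiency lemma, one single tight coordinate.
Vertices of the box `V_m` are pairs `(u, x)` with `x : I → ℚ`, `D·x(i) ∈ ℤ` and
`M·(m(i)−1) < x(i) ≤ M·m(i)`; we encode `x(i) = t(i)/D` with `t(i) : ℤ` ranging over
`Ioc (D·M·(m(i)−1)) (D·M·m(i))`.  The deficiency of `(u,x)` is the sum of `α(u,v)` over
those edges `(u,v)` with `0 < x(i) + β_i(u,v) ≤ K·M` for all `i`.  If `m` has one single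
tight coordinate `i₀` and the circulation `α` satisfies
`∑_{(u,v)∈E(G)} α(u,v)·β_{i₀}(u,v) = 0`, then the total deficiency over the box is `0`. -/
theorem stmt_0 {V : Type*} [Fintype V] {I : Type*} [Fintype I] [DecidableEq I]
    (G : SimpleGraph V) [DecidableRel G.Adj]
    (M D K : ℕ) (hM : 0 < M) (hD : 0 < D) (hK : 2 ≤ K)
    (β : I → V → V → ℚ)
    (hβanti : ∀ i u v, β i u v = - β i v u)
    (hβsupp : ∀ i u v, ¬ G.Adj u v → β i u v = 0)
    (hβbound : ∀ i u v, G.Adj u v → |β i u v| ≤ (M : ℚ))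
    (hβint : ∀ i u v, G.Adj u v → ∃ z : ℤ, (D : ℚ) * β i u v = (z : ℚ))
    (i₀ : I) (m : I → ℤ)
    (hm₀ : m i₀ = 1 ∨ m i₀ = (K : ℤ))
    (hm : ∀ i, i ≠ i₀ → 2 ≤ m i ∧ m i ≤ (K : ℤ) - 1)
    (α : V → V → ℝ)
    (hαanti : ∀ u v, α u v = - α v u)
    (hαsupp : ∀ u v, ¬ G.Adj u v → α u v = 0)
    (hflow : ∀ u, ∑ v ∈ Finset.univ.filter (fun v => G.Adj u v), α u v = 0)
    (horth : ∑ u : V, ∑ v ∈ Finset.univ.filter (fun v => G.Adj u v),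
        α u v * (β i₀ u v : ℝ) = 0) :
    ∑ u : V, ∑ t ∈ Fintype.piFinset
        (fun i : I => Finset.Ioc ((D : ℤ) * (M : ℤ) * (m i - 1)) ((D : ℤ) * (M : ℤ) * m i)),
      (∑ v ∈ Finset.univ.filter (fun v =>
          G.Adj u v ∧ ∀ i : I, 0 < (t i : ℚ) / (D : ℚ) + β i u v ∧
            (t i : ℚ) / (D : ℚ) + β i u v ≤ (K : ℚ) * (M : ℚ)),
        α u v) = 0 :=
  stmt_0_general G M D K hD hK β hβanti hβbound hβint i₀ m hm₀ hm α hαanti hflow horth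
end

section
/- Let H be a real inner product space, let k ≥ 1 be an integer, and let α_1, …, α_k ∈ H satisfy |‖α_i‖² − 1| ≤ 1/(2k) for every i and |⟨α_i, α_j⟩| ≤ 1/(2k) for all i ≠ j. Let γ ∈ H and c ≥ 0 with |⟨γ, α_i⟩| ≤ c for every i. Then there exists a unique vector x ∈ ℝ^k such that γ − ∑_{i=1}^k x_i α_i is orthogonal to every α_j, and this x satisfies |x_i| ≤ 2c for every i. -/
open scoped RealInnerProductSpace
open Finset Matrix

/-! The normal equations for `x` read `x ᵥ* G = (⟪γ, αⱼ⟫)ⱼ`, where `G` is the Gram matrix of the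
`αᵢ`. The hypotheses make `G` column diagonally dominant with margin `1 - k · 1/(2k) = 1/2`, and
a column diagonally dominant matrix with margin `m` satisfies `m ‖x‖∞ ≤ ‖x ᵥ* G‖∞`. This bound
makes `x ↦ x ᵥ* G` injective, hence bijective, and bounds the solution by `2c`. -/

namespace Matrix

variable {ι : Type*} [Fintype ι]

theorem inner_sub_sum_smul_eq_sub_vecMul_gram {H : Type*} [NormedAddCommGroup H]
    [InnerProductSpace ℝ H] (α : ι → H) (γ : H) (x : ι → ℝ) (j : ι) :
    ⟪γ - ∑ i, x i • α i, α j⟫ = ⟪γ, α j⟫ - (x ᵥ* gram ℝ α) j := by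
  simp [inner_sub_left, sum_inner, real_inner_smul_left, vecMul_apply_eq_sum]

variable [DecidableEq ι]

def IsColDominantWith (A : Matrix ι ι ℝ) (m : ℝ) : Prop :=
  ∀ j, m ≤ |A j j| - ∑ i ∈ univ.erase j, |A i j|

theorem IsColDominantWith.mul_abs_le {A : Matrix ι ι ℝ} {m d : ℝ}
    (hA : A.IsColDominantWith m) (hm : 0 ≤ m) {x : ι → ℝ} (hx : ∀ j, |(x ᵥ* A) j| ≤ d)
    (i : ι) : m * |x i| ≤ d := by
  obtain ⟨j, -, hj⟩ := exists_max_image univ (fun i => |x i|) ⟨i, mem_univ i⟩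
  set M := |x j|
  have hsplit : x j * A j j = (x ᵥ* A) j - ∑ i ∈ univ.erase j, x i * A i j := by
    rw [vecMul_apply_eq_sum, ← add_sum_erase _ _ (mem_univ j)]
    ring
  have hoff : |∑ i ∈ univ.erase j, x i * A i j| ≤ M * ∑ i ∈ univ.erase j, |A i j| := by
    rw [mul_sum]
    refine (abs_sum_le_sum_abs _ _).trans (sum_le_sum fun i _ => ?_)
    rw [abs_mul]
    exact mul_le_mul_of_nonneg_right (hj i (mem_univ i)) (abs_nonneg _)
  have hdiag : M * |A j j| ≤ d + M * ∑ i ∈ univ.erase j, |A i j| := by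
    rw [← abs_mul, hsplit]
    exact (abs_sub _ _).trans (add_le_add (hx j) hoff)
  calc m * |x i| ≤ m * M := mul_le_mul_of_nonneg_left (hj i (mem_univ i)) hm
    _ ≤ M * (|A j j| - ∑ i ∈ univ.erase j, |A i j|) := by
        rw [mul_comm]; exact mul_le_mul_of_nonneg_left (hA j) (abs_nonneg _)
    _ ≤ d := by linarith

theorem IsColDominantWith.vecMul_bijective {A : Matrix ι ι ℝ} {m : ℝ}
    (hA : A.IsColDominantWith m) (hm : 0 < m) : Function.Bijective A.vecMul := by
  have hinj : Function.Injective A.vecMul := by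
    intro x y hxy
    have hzero : ∀ j, |((x - y) ᵥ* A) j| ≤ 0 := fun j => by
      simp [sub_vecMul, show x ᵥ* A = y ᵥ* A from hxy]
    funext i
    have hi : m * |(x - y) i| ≤ m * 0 := by simpa using hA.mul_abs_le hm.le hzero i
    exact sub_eq_zero.mp (abs_nonpos_iff.mp (le_of_mul_le_mul_left hi hm))
  exact ⟨hinj, vecMul_surjective_iff_isUnit.mpr (vecMul_injective_iff_isUnit.mp hinj)⟩

theorem isColDominantWith_gram {H : Type*} [NormedAddCommGroup H] [InnerProductSpace ℝ H]
    {α : ι → H} {ε : ℝ} (hnorm : ∀ i, |‖α i‖ ^ 2 - 1| ≤ ε)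
    (horth : ∀ i j, i ≠ j → |⟪α i, α j⟫| ≤ ε) :
    (gram ℝ α).IsColDominantWith (1 - Fintype.card ι * ε) := by
  intro j
  have hdiag : 1 - ε ≤ |gram ℝ α j j| := by
    rw [gram_apply, real_inner_self_eq_norm_sq, abs_of_nonneg (sq_nonneg _)]
    linarith [(abs_le.mp (hnorm j)).1]
  have hoff : ∑ i ∈ univ.erase j, |gram ℝ α i j| ≤ (Fintype.card ι - 1) * ε := by
    calc ∑ i ∈ univ.erase j, |gram ℝ α i j| ≤ ∑ _i ∈ univ.erase j, ε :=
          sum_le_sum fun i hi => horth i j (ne_of_mem_erase hi)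
      _ = (Fintype.card ι - 1) * ε := by
          rw [sum_const, card_erase_of_mem (mem_univ j), card_univ, nsmul_eq_mul,
            Nat.cast_pred (Fintype.card_pos_iff.mpr ⟨j⟩)]
  linarith

end Matrix

theorem stmt_6_general {H : Type*} [NormedAddCommGroup H] [InnerProductSpace ℝ H]
    (k : ℕ) (hk : 1 ≤ k) (α : Fin k → H)
    (hnorm : ∀ i, |‖α i‖ ^ 2 - 1| ≤ 1 / (2 * (k : ℝ)))
    (horth : ∀ i j, i ≠ j → |⟪α i, α j⟫| ≤ 1 / (2 * (k : ℝ)))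
    (γ : H) (c : ℝ) (hγ : ∀ i, |⟪γ, α i⟫| ≤ c) :
    (∃! x : Fin k → ℝ, ∀ j, ⟪γ - ∑ i, x i • α i, α j⟫ = 0) ∧
    (∀ x : Fin k → ℝ, (∀ j, ⟪γ - ∑ i, x i • α i, α j⟫ = 0) → ∀ i, |x i| ≤ 2 * c) := by
  have hdom : (gram ℝ α).IsColDominantWith (1 / 2) := by
    have hmargin : 1 - (Fintype.card (Fin k) : ℝ) * (1 / (2 * k)) = 1 / 2 := by
      have : (k : ℝ) ≠ 0 := Nat.cast_ne_zero.mpr (by omega)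
      rw [Fintype.card_fin]
      field_simp
      ring
    simpa only [hmargin] using isColDominantWith_gram hnorm horth
  have hnormal : ∀ x : Fin k → ℝ,
      (∀ j, ⟪γ - ∑ i, x i • α i, α j⟫ = 0) ↔ x ᵥ* gram ℝ α = fun j => ⟪γ, α j⟫ := by
    simp only [inner_sub_sum_smul_eq_sub_vecMul_gram, sub_eq_zero, funext_iff, eq_comm,
      implies_true]
  refine ⟨?_, fun x hx i => ?_⟩
  · simp only [hnormal]
    exact (hdom.vecMul_bijective one_half_pos).existsUnique _
  · have hbound : ∀ j, |(x ᵥ* gram ℝ α) j| ≤ c := by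
      rw [(hnormal x).mp hx]
      exact hγ
    linarith [hdom.mul_abs_le one_half_pos.le hbound i]

/-- In a real inner product space, if `|‖αᵢ‖² − 1| ≤ 1/(2k)` and
`|⟨αᵢ, αⱼ⟩| ≤ 1/(2k)` for `i ≠ j`, and `|⟨γ, αᵢ⟩| ≤ c` for all `i` (`c ≥ 0`), then there
is a unique `x ∈ ℝᵏ` with `γ − ∑ xᵢ αᵢ` orthogonal to every `αⱼ`, and it satisfies
`|xᵢ| ≤ 2c` for every `i`. -/
theorem stmt_6 {H : Type*} [NormedAddCommGroup H] [InnerProductSpace ℝ H]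
    (k : ℕ) (hk : 1 ≤ k) (α : Fin k → H)
    (hnorm : ∀ i, |‖α i‖ ^ 2 - 1| ≤ 1 / (2 * (k : ℝ)))
    (horth : ∀ i j, i ≠ j → |⟪α i, α j⟫| ≤ 1 / (2 * (k : ℝ)))
    (γ : H) (c : ℝ) (hc : 0 ≤ c) (hγ : ∀ i, |⟪γ, α i⟫| ≤ c) :
    (∃! x : Fin k → ℝ, ∀ j, ⟪γ - ∑ i, x i • α i, α j⟫ = 0) ∧
    (∀ x : Fin k → ℝ, (∀ j, ⟪γ - ∑ i, x i • α i, α j⟫ = 0) → ∀ i, |x i| ≤ 2 * c) :=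
  stmt_6_general k hk α hnorm horth γ c hγ
end

section
/- For integers d ≥ 2 and m ≥ 1, the gadget graph Gad(2d, m) admits an orientation that is balanced everywhere except at u and v: there exists an antisymmetric function σ on pairs of vertices with σ(x,y) ∈ {1, −1} whenever x and y are adjacent and σ(x,y) = 0 otherwise, such that ∑_{y adjacent to x} σ(x,y) = 0 for every vertex x ∉ {u,v}, while ∑_{y adjacent to u} σ(u,y) = 1 and ∑_{y adjacent to v} σ(v,y) = −1. Equivalently, every vertex other than u and v has in-degree and out-degree both equal to d, u has out-degree d and in-degree d−1, and v has in-degree d and out-degree d−1. -/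
/-!
Orient every edge of the gadget away from `u`, layer by layer, towards `v`, give each oriented
edge a sign `±1`, and let `σ` be the resulting net flow. Sign the `2d - 1` columns by `c j`, `d`
of them `+1` and `d - 1` of them `-1`, so that `∑ j, c j = 1`. Then every inner vertex of column
`j` receives `c j` from the previous layer and passes `c j` on to the next: across a complete join
the edge `(j, j')` carries `c j * c j'`, and `∑ c = 1` collapses the sum over the other endpoint;
across a matching the edge `(j, j)` carries `c j`. So `u` emits `∑ j, c j = 1` and `v` absorbs it.
-/

/-- Vertices of the gadget graph `Gad(d,m)`: two distinguished vertices `u`, `v` and the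
internal vertices `(i,j)`, encoded with `i : Fin (2m)` (representing the label `i+1 ∈
{1,…,2m}`) and `j : Fin (d−1)` (representing the label `j+1 ∈ {1,…,d−1}`). -/
inductive GadV (d m : ℕ) where
  | u : GadV d m
  | v : GadV d m
  | inner : Fin (2 * m) → Fin (d - 1) → GadV d m
  deriving DecidableEq

/-- The base (asymmetric) edge relation of the gadget graph, in terms of the 1-based
labels `a = i+1`: `u` is adjacent to the vertices with label `1`, `v` to those with
label `2m`, consecutive labels `a, a+1` are completely joined when `a` is odd, and
joined by the parallel edges `j = j'` when `a` is even. -/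
def gadRel (d m : ℕ) : GadV d m → GadV d m → Prop
  | GadV.u, GadV.inner i _ => i.val = 0
  | GadV.v, GadV.inner i _ => i.val + 1 = 2 * m
  | GadV.inner i j, GadV.inner i' j' =>
      i'.val = i.val + 1 ∧ (Odd (i.val + 1) ∨ j = j')
  | _, _ => False

/-- The gadget graph `Gad(d,m)`. -/
def Gad (d m : ℕ) : SimpleGraph (GadV d m) := SimpleGraph.fromRel (gadRel d m)

section NetFlow

variable {V : Type*} (r : V → V → Prop) [DecidableRel r] (s : V → V → ℝ)

def netFlow (x y : V) : ℝ :=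
  (if r x y then s x y else 0) - (if r y x then s y x else 0)

def outflow [Fintype V] (x : V) : ℝ := ∑ y, if r x y then s x y else 0

def inflow [Fintype V] (x : V) : ℝ := ∑ y, if r y x then s y x else 0

variable {r s}

theorem netFlow_swap (x y : V) : netFlow r s x y = -netFlow r s y x :=
  (neg_sub _ _).symm

theorem netFlow_eq_one_or_neg_one (hr : ∀ x y, r x y → ¬ r y x)
    (hs : ∀ x y, r x y → s x y = 1 ∨ s x y = -1) {x y : V} (hxy : r x y ∨ r y x) :
    netFlow r s x y = 1 ∨ netFlow r s x y = -1 := by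
  rcases hxy with h | h
  · simpa [netFlow, h, hr x y h] using hs x y h
  · rcases hs y x h with h' | h' <;> simp [netFlow, h, hr y x h, h']

theorem netFlow_eq_zero {x y : V} (hxy : ¬ r x y) (hyx : ¬ r y x) : netFlow r s x y = 0 := by
  simp [netFlow, hxy, hyx]

theorem sum_netFlow [Fintype V] (x : V) :
    ∑ y, netFlow r s x y = outflow r s x - inflow r s x :=
  Finset.sum_sub_distrib ..

end NetFlow

theorem SimpleGraph.finsum_mem_neighborSet_eq_sum {V M : Type*} [Fintype V] [AddCommMonoid M]
    (G : SimpleGraph V) (x : V) {f : V → M} (hf : ∀ y, ¬ G.Adj x y → f y = 0) :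
    ∑ᶠ y ∈ G.neighborSet x, f y = ∑ y, f y := by
  rw [finsum_mem_eq_sum_of_inter_support_eq f (t := Finset.univ)]
  ext y
  simp only [Set.mem_inter_iff, Function.mem_support, Finset.coe_univ, Set.mem_univ, true_and,
    SimpleGraph.mem_neighborSet, and_iff_right_iff_imp]
  exact fun hy => by_contra fun h => hy (hf y h)

theorem Fin.sum_ite_val_eq {M : Type*} [AddCommMonoid M] (n k : ℕ) (a : M) :
    ∑ i : Fin n, (if (i : ℕ) = k then a else 0) = if k < n then a else 0 := by
  split_ifs with hk
  · rw [Finset.sum_eq_single ⟨k, hk⟩ (fun i _ hi => if_neg fun h => hi (Fin.ext h)) (by simp)]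
    simp
  · exact Finset.sum_eq_zero fun i _ => if_neg (by omega)

theorem Fin.sum_ite_val_add_one_eq {M : Type*} [AddCommMonoid M] (n k : ℕ) (a : M) :
    ∑ i : Fin n, (if k = (i : ℕ) + 1 then a else 0) = if 0 < k ∧ k ≤ n then a else 0 := by
  rcases k with _ | k
  · simp
  · simp only [Nat.add_right_cancel_iff, @eq_comm _ k, Fin.sum_ite_val_eq]
    congr 1
    simp only [Nat.succ_pos, true_and, Nat.succ_le_iff]

theorem mul_eq_one_or_neg_one {R : Type*} [Monoid R] [HasDistribNeg R] {a b : R}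
    (ha : a = 1 ∨ a = -1) (hb : b = 1 ∨ b = -1) : a * b = 1 ∨ a * b = -1 := by
  rcases ha with rfl | rfl <;> rcases hb with rfl | rfl <;> simp

namespace GadV

def equivSum (n m : ℕ) : GadV n m ≃ Unit ⊕ Unit ⊕ Fin (2 * m) × Fin (n - 1) where
  toFun
    | u => .inl ()
    | v => .inr (.inl ())
    | inner i j => .inr (.inr (i, j))
  invFun
    | .inl _ => u
    | .inr (.inl _) => v
    | .inr (.inr (i, j)) => inner i j
  left_inv x := by cases x <;> rfl
  right_inv z := by rcases z with _ | _ | _ <;> rfl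

instance (n m : ℕ) : Fintype (GadV n m) := Fintype.ofEquiv _ (equivSum n m).symm

theorem sum_univ_eq {M : Type*} [AddCommMonoid M] {n m : ℕ} (f : GadV n m → M) :
    ∑ x, f x = f u + f v + ∑ i, ∑ j, f (inner i j) := by
  rw [← (equivSum n m).symm.sum_comp f, Fintype.sum_sum_type, Fintype.sum_sum_type,
    Fintype.sum_prod_type]
  simp [equivSum, add_assoc]

end GadV

/-- The edges of `Gad n m` directed from `u` through the layers `0, 1, …, 2m-1` to `v`. -/
def gadFwd (n m : ℕ) : GadV n m → GadV n m → Prop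
  | .u, .inner i _ => (i : ℕ) = 0
  | .inner i _, .v => (i : ℕ) + 1 = 2 * m
  | .inner i j, .inner i' j' => (i' : ℕ) = i + 1 ∧ (Odd ((i : ℕ) + 1) ∨ j = j')
  | _, _ => False

instance (n m : ℕ) : DecidableRel (gadFwd n m) := fun x y => by
  cases x <;> cases y <;> (unfold gadFwd; infer_instance)

theorem gad_adj_iff {n m : ℕ} {x y : GadV n m} :
    (Gad n m).Adj x y ↔ gadFwd n m x y ∨ gadFwd n m y x := by
  cases x <;> cases y <;> simp [Gad, gadRel, gadFwd]
  omega

theorem gadFwd_asymm {n m : ℕ} (x y : GadV n m) : gadFwd n m x y → ¬ gadFwd n m y x := by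
  cases x <;> cases y <;> simp [gadFwd]
  omega

def colSign (d : ℕ) (j : Fin (2 * d - 1)) : ℝ := if (j : ℕ) < d then 1 else -1

theorem colSign_eq_one_or_neg_one (d : ℕ) (j : Fin (2 * d - 1)) :
    colSign d j = 1 ∨ colSign d j = -1 := by
  unfold colSign; split_ifs <;> simp

theorem sum_colSign {d : ℕ} (hd : 1 ≤ d) : ∑ j, colSign d j = 1 := by
  simp only [colSign]
  rw [Fin.sum_univ_eq_sum_range (fun j => if j < d then (1 : ℝ) else -1),
    ← Finset.sum_range_add_sum_Ico _ (show d ≤ 2 * d - 1 by omega),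
    Finset.sum_congr rfl fun j hj => if_pos (Finset.mem_range.1 hj),
    Finset.sum_congr rfl fun j hj => if_neg (Finset.mem_Ico.1 hj).1.not_gt]
  simp only [Finset.sum_const, Finset.card_range, Nat.card_Ico, nsmul_eq_mul, mul_one]
  rw [show 2 * d - 1 - d = d - 1 by omega, Nat.cast_sub hd]
  ring

def gadSign (d m : ℕ) : GadV (2 * d) m → GadV (2 * d) m → ℝ
  | .u, .inner _ j => colSign d j
  | .inner _ j, .v => colSign d j
  | .inner i j, .inner _ j' =>
      if Odd ((i : ℕ) + 1) then colSign d j * colSign d j' else colSign d j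
  | _, _ => 0

section GadgetFlow

variable {d m : ℕ}

theorem gadSign_eq_one_or_neg_one {x y : GadV (2 * d) m} (h : gadFwd (2 * d) m x y) :
    gadSign d m x y = 1 ∨ gadSign d m x y = -1 := by
  rcases x with _ | _ | ⟨i, j⟩ <;> rcases y with _ | _ | ⟨i', j'⟩ <;> simp only [gadFwd] at h
  · exact colSign_eq_one_or_neg_one d j'
  · exact colSign_eq_one_or_neg_one d j
  · simp only [gadSign]
    split_ifs
    · exact mul_eq_one_or_neg_one (colSign_eq_one_or_neg_one d j) (colSign_eq_one_or_neg_one d j')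
    · exact colSign_eq_one_or_neg_one d j

theorem gad_sum_outflow_to_layer (hd : 1 ≤ d) (i i' : Fin (2 * m)) (j : Fin (2 * d - 1)) :
    ∑ j', (if gadFwd (2 * d) m (.inner i j) (.inner i' j') then
      gadSign d m (.inner i j) (.inner i' j') else 0) =
      if (i' : ℕ) = i + 1 then colSign d j else 0 := by
  by_cases hi : Odd ((i : ℕ) + 1) <;>
    simp [gadFwd, gadSign, hi, ite_and, ← Finset.mul_sum, sum_colSign hd]

theorem gad_sum_inflow_from_layer (hd : 1 ≤ d) (i i' : Fin (2 * m)) (j' : Fin (2 * d - 1)) :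
    ∑ j, (if gadFwd (2 * d) m (.inner i j) (.inner i' j') then
      gadSign d m (.inner i j) (.inner i' j') else 0) =
      if (i' : ℕ) = i + 1 then colSign d j' else 0 := by
  by_cases hi : Odd ((i : ℕ) + 1) <;>
    simp [gadFwd, gadSign, hi, ite_and, ← Finset.sum_mul, sum_colSign hd]

theorem gad_outflow_u (hd : 1 ≤ d) (hm : 1 ≤ m) :
    outflow (gadFwd (2 * d) m) (gadSign d m) .u = 1 := by
  simp only [outflow, GadV.sum_univ_eq]
  rw [Finset.sum_comm]
  simp [gadFwd, gadSign, Fin.sum_ite_val_eq, sum_colSign hd, show 0 < 2 * m by omega]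

theorem gad_inflow_u : inflow (gadFwd (2 * d) m) (gadSign d m) .u = 0 := by
  simp [inflow, gadFwd]

theorem gad_outflow_v : outflow (gadFwd (2 * d) m) (gadSign d m) .v = 0 := by
  simp [outflow, gadFwd]

theorem gad_inflow_v (hd : 1 ≤ d) (hm : 1 ≤ m) :
    inflow (gadFwd (2 * d) m) (gadSign d m) .v = 1 := by
  simp only [inflow, GadV.sum_univ_eq]
  rw [Finset.sum_comm]
  simp only [gadFwd, gadSign]
  simp_rw [show ∀ i : Fin (2 * m), ((i : ℕ) + 1 = 2 * m ↔ (i : ℕ) = 2 * m - 1) from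
    fun i => by omega]
  simp [Fin.sum_ite_val_eq, sum_colSign hd, show 2 * m - 1 < 2 * m by omega]

theorem gad_outflow_inner (hd : 1 ≤ d) (i : Fin (2 * m)) (j : Fin (2 * d - 1)) :
    outflow (gadFwd (2 * d) m) (gadSign d m) (.inner i j) = colSign d j := by
  simp only [outflow, GadV.sum_univ_eq, gad_sum_outflow_to_layer hd, Fin.sum_ite_val_eq]
  obtain h | h : (i : ℕ) + 1 < 2 * m ∨ (i : ℕ) + 1 = 2 * m := by omega
  · simp [gadFwd, h, h.ne]
  · simp [gadFwd, gadSign, h]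

theorem gad_inflow_inner (hd : 1 ≤ d) (i : Fin (2 * m)) (j : Fin (2 * d - 1)) :
    inflow (gadFwd (2 * d) m) (gadSign d m) (.inner i j) = colSign d j := by
  simp only [inflow, GadV.sum_univ_eq, gad_sum_inflow_from_layer hd, Fin.sum_ite_val_add_one_eq]
  rcases Nat.eq_zero_or_pos i with h | h
  · simp [gadFwd, gadSign, h]
  · simp [gadFwd, h, h.ne', i.isLt.le]

end GadgetFlow

/-- For `d ≥ 2` and `m ≥ 1` the gadget graph `Gad(2d,m)` admits an
orientation `σ` (antisymmetric, `±1` on adjacent pairs, `0` otherwise) which is balanced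
at every vertex except `u` and `v`, with `∑_{y ~ u} σ(u,y) = 1` and
`∑_{y ~ v} σ(v,y) = −1` (so `u` has out-degree `d` and in-degree `d−1`, and `v` has
in-degree `d` and out-degree `d−1`). -/
theorem stmt_17 (d m : ℕ) (hd : 2 ≤ d) (hm : 1 ≤ m) :
    ∃ σ : GadV (2 * d) m → GadV (2 * d) m → ℝ,
      (∀ x y, σ x y = - σ y x) ∧
      (∀ x y, (Gad (2 * d) m).Adj x y → (σ x y = 1 ∨ σ x y = -1)) ∧
      (∀ x y, ¬ (Gad (2 * d) m).Adj x y → σ x y = 0) ∧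
      (∀ x, x ≠ GadV.u → x ≠ GadV.v →
        ∑ᶠ y ∈ (Gad (2 * d) m).neighborSet x, σ x y = 0) ∧
      (∑ᶠ y ∈ (Gad (2 * d) m).neighborSet GadV.u, σ GadV.u y = 1) ∧
      (∑ᶠ y ∈ (Gad (2 * d) m).neighborSet GadV.v, σ GadV.v y = -1) := by
  have hd' : 1 ≤ d := by omega
  set σ := netFlow (gadFwd (2 * d) m) (gadSign d m)
  have vanish : ∀ x y, ¬ (Gad (2 * d) m).Adj x y → σ x y = 0 := fun x y h =>
    netFlow_eq_zero (fun h' => h (gad_adj_iff.2 (.inl h'))) (fun h' => h (gad_adj_iff.2 (.inr h')))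
  have net x : ∑ᶠ y ∈ (Gad (2 * d) m).neighborSet x, σ x y =
      outflow (gadFwd (2 * d) m) (gadSign d m) x - inflow (gadFwd (2 * d) m) (gadSign d m) x := by
    rw [SimpleGraph.finsum_mem_neighborSet_eq_sum _ x (vanish x), sum_netFlow]
  refine ⟨σ, netFlow_swap, fun x y h => netFlow_eq_one_or_neg_one gadFwd_asymm
    (fun _ _ => gadSign_eq_one_or_neg_one) (gad_adj_iff.1 h), vanish, ?_, ?_, ?_⟩
  · rintro (_ | _ | ⟨i, j⟩) hu hv
    · exact absurd rfl hu
    · exact absurd rfl hv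
    · rw [net, gad_outflow_inner hd' i j, gad_inflow_inner hd' i j, sub_self]
  · rw [net, gad_outflow_u hd' hm, gad_inflow_u, sub_zero]
  · rw [net, gad_outflow_v, gad_inflow_v hd' hm, zero_sub]
end

section
/- For integers d ≥ 3, m ≥ 1, and any color i ∈ {1,…,d}, the gadget graph Gad(d,m) admits a proper edge coloring with colors {1,…,d} such that every vertex of the form (l,j) with l ∈ {1,…,2m}, j ∈ {1,…,d−1} is incident to edges of all d colors, and no edge incident to u and no edge incident to v receives the color i (so u and v each miss exactly the color i). -/
namespace Gad

variable {d m : ℕ}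

def label (j : Fin (d - 1)) : Fin d := ⟨j.val + 1, by omega⟩

lemma label_injective : Function.Injective (label : Fin (d - 1) → Fin d) := by
  intro j j' h
  simpa [label, Fin.ext_iff] using h

lemma label_ne_zero [NeZero d] (j : Fin (d - 1)) : label j ≠ 0 := by
  simp [label, Fin.ext_iff]

lemma exists_label_eq [NeZero d] {c : Fin d} (hc : c ≠ 0) : ∃ j, label j = c := by
  have := Fin.pos_iff_ne_zero.mpr hc
  exact ⟨⟨c.val - 1, by omega⟩, Fin.ext (by simp [label]; omega)⟩

/- Rows `2k` and `2k+1` (0-based) are completely joined. Besides its `d - 1` neighbours in the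
joined row, the internal vertex `(l, j)` has exactly one further neighbour, its rung neighbour:
`u`, `v`, or the vertex of column `j` in the other adjacent row. -/
def joinRow (l : Fin (2 * m)) : Fin (2 * m) :=
  if h : Even l.val then ⟨l.val + 1, by rw [Nat.even_iff] at h; omega⟩
  else ⟨l.val - 1, by omega⟩

def rungNeighbor (l : Fin (2 * m)) (j : Fin (d - 1)) : GadV d m :=
  if Even l.val then
    if h : l.val = 0 then .u else .inner ⟨l.val - 1, by omega⟩ j
  else
    if h : l.val + 1 = 2 * m then .v else .inner ⟨l.val + 1, by omega⟩ j

lemma adj_u_iff {y : GadV d m} : (Gad d m).Adj .u y ↔ ∃ l j, l.val = 0 ∧ y = .inner l j := by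
  cases y <;> simp [Gad, gadRel]

lemma adj_v_iff {y : GadV d m} :
    (Gad d m).Adj .v y ↔ ∃ l j, l.val + 1 = 2 * m ∧ y = .inner l j := by
  cases y <;> simp [Gad, gadRel]

lemma adj_inner_iff {l : Fin (2 * m)} {j : Fin (d - 1)} {y : GadV d m} :
    (Gad d m).Adj (.inner l j) y ↔
      (∃ j', y = .inner (joinRow l) j') ∨ y = rungNeighbor l j := by
  have := l.isLt
  cases y <;>
    simp only [Gad, SimpleGraph.fromRel_adj, gadRel, joinRow, rungNeighbor, Nat.even_iff,
      Nat.odd_iff] <;>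
    split_ifs <;> simp [Fin.ext_iff] <;> omega

variable (i : Fin d)

/- On non-edges the value is irrelevant; `min j j'` only makes the rung colour symmetric. -/
def color : GadV d m → GadV d m → Fin d
  | .u, .inner _ j | .inner _ j, .u | .v, .inner _ j | .inner _ j, .v => i + label j
  | .inner l j, .inner l' j' =>
      if Even (min l.val l'.val) then i + label j + label j' else i + label (min j j')
  | _, _ => i

lemma color_comm (x y : GadV d m) : color i x y = color i y x := by
  rcases x with _ | _ | ⟨l, j⟩ <;> rcases y with _ | _ | ⟨l', j'⟩ <;> simp only [color]
  rw [min_comm l.val, min_comm j, add_right_comm]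

lemma color_joinRow (l : Fin (2 * m)) (j j' : Fin (d - 1)) :
    color i (.inner l j) (.inner (joinRow l) j') = i + label j + label j' := by
  have := l.isLt
  simp only [color, joinRow]
  split_ifs with h <;> simp_all [Nat.even_iff]; omega

lemma color_rungNeighbor (l : Fin (2 * m)) (j : Fin (d - 1)) :
    color i (.inner l j) (rungNeighbor l j) = i + label j := by
  simp only [rungNeighbor]
  split_ifs <;> simp_all [color, Nat.even_iff]; omega

lemma add_label_ne_of_ne {l l' : Fin (2 * m)} {j j' : Fin (d - 1)} (hl : l.val = l'.val)
    (h : GadV.inner l j ≠ .inner l' j') : i + label j ≠ i + label j' := by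
  intro hc
  exact h (by rw [Fin.ext hl, label_injective (add_left_cancel hc)])

lemma color_ne_of_adj [NeZero d] {x y z : GadV d m} (hy : (Gad d m).Adj x y)
    (hz : (Gad d m).Adj x z) (hyz : y ≠ z) : color i x y ≠ color i x z := by
  rcases x with _ | _ | ⟨l, j⟩
  · obtain ⟨l, j, hl, rfl⟩ := adj_u_iff.1 hy
    obtain ⟨l', j', hl', rfl⟩ := adj_u_iff.1 hz
    exact add_label_ne_of_ne i (hl.trans hl'.symm) hyz
  · obtain ⟨l, j, hl, rfl⟩ := adj_v_iff.1 hy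
    obtain ⟨l', j', hl', rfl⟩ := adj_v_iff.1 hz
    exact add_label_ne_of_ne i (by omega) hyz
  · rcases adj_inner_iff.1 hy with ⟨j₁, rfl⟩ | rfl <;>
      rcases adj_inner_iff.1 hz with ⟨j₂, rfl⟩ | rfl <;>
      simp only [color_joinRow, color_rungNeighbor]
    · exact add_label_ne_of_ne _ rfl hyz
    · simpa using label_ne_zero j₁
    · simpa using label_ne_zero j₂
    · exact absurd rfl hyz

lemma exists_adj_color_eq [NeZero d] (l : Fin (2 * m)) (j : Fin (d - 1)) (c : Fin d) :
    ∃ y, (Gad d m).Adj (.inner l j) y ∧ color i (.inner l j) y = c := by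
  by_cases hc : c = i + label j
  · exact ⟨rungNeighbor l j, adj_inner_iff.2 (Or.inr rfl), by rw [color_rungNeighbor, hc]⟩
  · obtain ⟨j', hj'⟩ := exists_label_eq (sub_ne_zero.2 hc)
    exact ⟨.inner (joinRow l) j', adj_inner_iff.2 (Or.inl ⟨j', rfl⟩),
      by rw [color_joinRow, hj', add_sub_cancel]⟩

lemma color_u_ne [NeZero d] {y : GadV d m} (hy : (Gad d m).Adj .u y) : color i .u y ≠ i := by
  obtain ⟨l, j, -, rfl⟩ := adj_u_iff.1 hy
  simpa [color] using label_ne_zero j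

lemma color_v_ne [NeZero d] {y : GadV d m} (hy : (Gad d m).Adj .v y) : color i .v y ≠ i := by
  obtain ⟨l, j, -, rfl⟩ := adj_v_iff.1 hy
  simpa [color] using label_ne_zero j

end Gad

theorem stmt_18_general (d m : ℕ) (i : Fin d) :
    ∃ col : GadV d m → GadV d m → Fin d,
      (∀ x y, col x y = col y x) ∧
      (∀ x y z, (Gad d m).Adj x y → (Gad d m).Adj x z → y ≠ z →
        col x y ≠ col x z) ∧
      (∀ (l : Fin (2 * m)) (j : Fin (d - 1)) (c : Fin d),
        ∃ y, (Gad d m).Adj (GadV.inner l j) y ∧ col (GadV.inner l j) y = c) ∧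
      (∀ y, (Gad d m).Adj GadV.u y → col GadV.u y ≠ i) ∧
      (∀ y, (Gad d m).Adj GadV.v y → col GadV.v y ≠ i) := by
  have : NeZero d := ⟨i.pos.ne'⟩
  exact ⟨Gad.color i, Gad.color_comm i, fun _ _ _ => Gad.color_ne_of_adj i,
    Gad.exists_adj_color_eq i, fun _ => Gad.color_u_ne i, fun _ => Gad.color_v_ne i⟩

/-- For `d ≥ 3`, `m ≥ 1` and any color `i`, the gadget graph `Gad(d,m)`
admits a proper edge coloring with `d` colors (given as a symmetric function on adjacent
pairs) such that every internal vertex is incident to edges of all `d` colors, while no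
edge incident to `u`, and no edge incident to `v`, receives the color `i`. -/
theorem stmt_18 (d m : ℕ) (hd : 3 ≤ d) (hm : 1 ≤ m) (i : Fin d) :
    ∃ col : GadV d m → GadV d m → Fin d,
      (∀ x y, col x y = col y x) ∧
      (∀ x y z, (Gad d m).Adj x y → (Gad d m).Adj x z → y ≠ z →
        col x y ≠ col x z) ∧
      (∀ (l : Fin (2 * m)) (j : Fin (d - 1)) (c : Fin d),
        ∃ y, (Gad d m).Adj (GadV.inner l j) y ∧ col (GadV.inner l j) y = c) ∧
      (∀ y, (Gad d m).Adj GadV.u y → col GadV.u y ≠ i) ∧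
      (∀ y, (Gad d m).Adj GadV.v y → col GadV.v y ≠ i) :=
  stmt_18_general d m i
end
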